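/- Let D be a dyadic family with inheritance coefficient B and f ∈ L¹(X,μ) with |⟨f, ψ^λ_{j,k}⟩| ≤ C·μ(Q_{j,k})^{α+1/2} for all j,k,λ. Then for every J ≥ 1 and all m,n ∈ K_J, |f_{Q_{J,m}} − f_{Q_{J,n}}| ≤ (2C·B^α·√(B(B−1)) / (B^α − (B−1)^α)) · δ_D(Q_{J,m}, Q_{J,n})^α. Hence f belongs to the pixelated Lipschitz class Λ_{δ_D}(α). -/

import Mathlib

open MeasureTheory Set

/-- A dyadic family with inheritance coefficient `B` on a probability space `(X, μ)`:
nested finite partitions `cubes j` of `X` into measurable sets of positive measure,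
`cubes 0 = {univ}`, each cube at level `j+1` strictly contained in a unique cube
(its first ancestor) at level `j`, and `μ(ancestor) ≤ B · μ(child)`. -/
structure DyadicFamily {X : Type*} [MeasurableSpace X] (μ : MeasureTheory.Measure X)
    (B : ℝ) where
  cubes : ℕ → Set (Set X)
  finiteLevel : ∀ j, (cubes j).Finite
  meas : ∀ j, ∀ Q ∈ cubes j, MeasurableSet Q
  zeroth : cubes 0 = {Set.univ}
  cover : ∀ j, ⋃₀ cubes j = Set.univ
  pdisjoint : ∀ j, (cubes j).PairwiseDisjoint id
  posMeasure : ∀ j, ∀ Q ∈ cubes j, 0 < μ Q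
  ancestor : ∀ j, ∀ Q ∈ cubes (j + 1), ∃! P, P ∈ cubes j ∧ Q ⊂ P
  inherit : ∀ j, ∀ Q ∈ cubes (j + 1), ∀ P ∈ cubes j, Q ⊂ P →
    (μ P).toReal ≤ B * (μ Q).toReal
  prob : μ Set.univ = 1

namespace DyadicFamily

variable {X : Type*} [MeasurableSpace X] {μ : MeasureTheory.Measure X} {B : ℝ}

/-- Membership in the dyadic family: `Q` is a cube of some level. -/
def Mem (D : DyadicFamily μ B) (Q : Set X) : Prop := ∃ j, Q ∈ D.cubes j

/-- The offspring of a cube `Q` of level `j`: the cubes of level `j+1`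
strictly contained in `Q` (equivalently, whose first ancestor is `Q`). -/
def offspring (D : DyadicFamily μ B) (j : ℕ) (Q : Set X) : Set (Set X) :=
  {Q' ∈ D.cubes (j + 1) | Q' ⊂ Q}

/-- The pseudo-ultrametric `δ_D(x,y) = inf {μ(Q) : x, y ∈ Q ∈ D}`. -/
noncomputable def delta (D : DyadicFamily μ B) (x y : X) : ℝ :=
  sInf {r : ℝ | ∃ Q, D.Mem Q ∧ x ∈ Q ∧ y ∈ Q ∧ r = (μ Q).toReal}

/-- The distance between two dyadic cubes via the smallest common dyadic ancestor. -/
noncomputable def cubeDist (D : DyadicFamily μ B) (Q₁ Q₂ : Set X) : ℝ :=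
  sInf {r : ℝ | ∃ P, D.Mem P ∧ Q₁ ∪ Q₂ ⊆ P ∧ r = (μ P).toReal}

/-- Mean value of `f` over `Q`. -/
noncomputable def avg (μ : MeasureTheory.Measure X) (f : X → ℝ) (Q : Set X) : ℝ :=
  ((μ Q).toReal)⁻¹ * ∫ x in Q, f x ∂μ

/-- `f` belongs to `V_{j,Q}`: it vanishes outside `Q` and is constant on each
offspring cube of `Q`. -/
def MemV (D : DyadicFamily μ B) (j : ℕ) (Q : Set X) (f : X → ℝ) : Prop :=
  (∀ Q' ∈ D.offspring j Q, ∃ c : ℝ, ∀ x ∈ Q', f x = c) ∧ ∀ x ∉ Q, f x = 0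

end DyadicFamily

/-!
On a cube `P` of level `j`, the function equal to `f_{Q'} - f_P` on each offspring `Q'` of `P`
is a mean-zero element of `V_{j,P}`, so it expands in the Haar functions `ψ^λ_{j,P}`, and its
coefficients are the Haar coefficients `⟨f, ψ^λ_{j,P}⟩` of `f`. There are at most `B - 1` of
them, each at most `C μ(P)^{α+1/2}`, and Bessel's inequality gives
`∑_λ ψ^λ_{j,P}(x)² ≤ 1 / μ(Q') ≤ B / μ(P)` for `x ∈ Q'`; Cauchy–Schwarz then yields
`|f_{Q'} - f_P| ≤ C √(B(B-1)) μ(P)^α`. Each generation shrinks measures by the factor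
`(B-1)/B`, so along the chains from the smallest common ancestor of `Q_{J,m}` and `Q_{J,n}`
down to them these bounds form geometric series of ratio `((B-1)/B)^α`, whose sum gives the
constant `2 B^α / (B^α - (B-1)^α)`.
-/

section Orthonormal

variable {X ι : Type*} [MeasurableSpace X] [DecidableEq ι] {μ : Measure X} {s : Finset ι}
  {ψ : ι → X → ℝ}

theorem integral_sum_mul_eq_of_orthonormal
    (hint : ∀ i ∈ s, ∀ i' ∈ s, Integrable (fun x => ψ i x * ψ i' x) μ)
    (horth : ∀ i ∈ s, ∀ i' ∈ s, ∫ x, ψ i x * ψ i' x ∂μ = if i = i' then 1 else 0)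
    (c : ι → ℝ) {i' : ι} (hi' : i' ∈ s) :
    ∫ x, (∑ i ∈ s, c i * ψ i x) * ψ i' x ∂μ = c i' := by
  simp_rw [Finset.sum_mul, mul_assoc]
  rw [integral_finsetSum _ fun i hi => (hint i hi i' hi').const_mul (c i)]
  simp_rw [integral_const_mul]
  rw [Finset.sum_congr rfl fun i hi => by rw [horth i hi i' hi']]
  simp only [mul_ite, mul_one, mul_zero, Finset.sum_ite_eq', if_pos hi']

/-- Bessel's inequality for the indicator of `S`, in the form of a pointwise bound. -/
theorem sum_sq_mul_measureReal_le_one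
    (hint : ∀ i ∈ s, ∀ i' ∈ s, Integrable (fun x => ψ i x * ψ i' x) μ)
    (horth : ∀ i ∈ s, ∀ i' ∈ s, ∫ x, ψ i x * ψ i' x ∂μ = if i = i' then 1 else 0)
    {S : Set X} (hS : MeasurableSet S) {x : X}
    (hconst : ∀ i ∈ s, ∀ y ∈ S, ψ i y = ψ i x) :
    (∑ i ∈ s, ψ i x ^ 2) * μ.real S ≤ 1 := by
  set T := ∑ i ∈ s, ψ i x ^ 2
  -- the reproducing kernel of `span ψ` at `x`
  set k : X → ℝ := fun y => ∑ i ∈ s, ψ i x * ψ i y with hk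
  have hkψ_int : ∀ i' ∈ s, Integrable (fun y => k y * ψ i' y) μ := fun i' hi' => by
    simp_rw [hk, Finset.sum_mul, mul_assoc]
    exact integrable_finsetSum _ fun i hi => (hint i hi i' hi').const_mul _
  have hkk_int : Integrable (fun y => k y * k y) μ := by
    conv => enter [1, y, 2]; rw [hk]
    simp_rw [Finset.mul_sum, mul_left_comm (k _)]
    exact integrable_finsetSum _ fun i hi => (hkψ_int i hi).const_mul _
  have hkk : ∫ y, k y * k y ∂μ = T := by
    conv => enter [1, 2, y, 2]; rw [hk]
    simp_rw [Finset.mul_sum, mul_left_comm (k _)]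
    rw [integral_finsetSum _ fun i hi => (hkψ_int i hi).const_mul _]
    refine Finset.sum_congr rfl fun i hi => ?_
    rw [integral_const_mul, integral_sum_mul_eq_of_orthonormal hint horth _ hi, sq]
  have hkS : ∀ y ∈ S, k y = T := fun y hy =>
    Finset.sum_congr rfl fun i hi => by rw [hconst i hi y hy, sq]
  have hTT : T * T * μ.real S ≤ T := calc
    T * T * μ.real S = ∫ y in S, k y * k y ∂μ := by
      rw [setIntegral_congr_fun hS fun y hy => by rw [hkS y hy], setIntegral_const, smul_eq_mul]
      ring
    _ ≤ ∫ y, k y * k y ∂μ :=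
      setIntegral_le_integral hkk_int (Filter.Eventually.of_forall fun y => mul_self_nonneg _)
    _ = T := hkk
  rcases (Finset.sum_nonneg fun i _ => sq_nonneg (ψ i x) : 0 ≤ T).eq_or_lt with hT | hT
  · rw [show T = 0 from hT.symm, zero_mul]; exact zero_le_one
  · nlinarith

end Orthonormal

namespace DyadicFamily

variable {X : Type*} [MeasurableSpace X] {μ : Measure X} {B : ℝ} (D : DyadicFamily μ B)
  {j J : ℕ} {P Q R : Set X} {e : Set X → ℝ} {f : X → ℝ}

theorem isProbabilityMeasure (D : DyadicFamily μ B) : IsProbabilityMeasure μ := ⟨D.prob⟩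

theorem eq_of_mem_of_mem (hQ : Q ∈ D.cubes j) (hR : R ∈ D.cubes j) {x : X} (hxQ : x ∈ Q)
    (hxR : x ∈ R) : Q = R :=
  (D.pdisjoint j).elim hQ hR (not_disjoint_iff.2 ⟨x, hxQ, hxR⟩)

theorem nonempty_of_mem_cubes (hQ : Q ∈ D.cubes j) : Q.Nonempty :=
  nonempty_of_measure_ne_zero (D.posMeasure j Q hQ).ne'

theorem toReal_measure_pos (hQ : Q ∈ D.cubes j) : 0 < (μ Q).toReal :=
  have := D.isProbabilityMeasure
  ENNReal.toReal_pos (D.posMeasure j Q hQ).ne' (measure_ne_top μ Q)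

theorem exists_mem_cubes (j : ℕ) (x : X) : ∃ Q ∈ D.cubes j, x ∈ Q :=
  mem_sUnion.1 ((D.cover j).symm ▸ mem_univ x)

theorem subset_of_mem_of_mem {l : ℕ} (hQ : Q ∈ D.cubes (j + l)) (hP : P ∈ D.cubes j) {x : X}
    (hxQ : x ∈ Q) (hxP : x ∈ P) : Q ⊆ P := by
  induction l generalizing Q with
  | zero => exact (D.eq_of_mem_of_mem hQ hP hxQ hxP).le
  | succ l ih =>
    obtain ⟨R, ⟨hR, hQR⟩, -⟩ := D.ancestor (j + l) Q hQ
    exact hQR.subset.trans (ih hR (hQR.subset hxQ))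

theorem mem_offspring_of_subset (hP : P ∈ D.cubes j) (hQ : Q ∈ D.cubes (j + 1))
    (hQP : Q ⊆ P) : Q ∈ D.offspring j P := by
  obtain ⟨R, ⟨hR, hQR⟩, -⟩ := D.ancestor j Q hQ
  obtain ⟨x, hx⟩ := D.nonempty_of_mem_cubes hQ
  exact ⟨hQ, D.eq_of_mem_of_mem hR hP (hQR.subset hx) (hQP hx) ▸ hQR⟩

theorem exists_mem_offspring (hP : P ∈ D.cubes j) {x : X} (hx : x ∈ P) :
    ∃ Q ∈ D.offspring j P, x ∈ Q := by
  obtain ⟨Q, hQ, hxQ⟩ := D.exists_mem_cubes (j + 1) x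
  exact ⟨Q, D.mem_offspring_of_subset hP hQ (D.subset_of_mem_of_mem hQ hP hxQ hx), hxQ⟩

/-- An offspring cube misses at least one sibling, whose measure is at least `μ P / B`. -/
theorem mul_toReal_measure_offspring_le (hP : P ∈ D.cubes j) (hQ : Q ∈ D.offspring j P) :
    B * (μ Q).toReal ≤ (B - 1) * (μ P).toReal := by
  have := D.isProbabilityMeasure
  obtain ⟨x, hxP, hxQ⟩ := exists_of_ssubset hQ.2
  obtain ⟨R, hR, hxR⟩ := D.exists_mem_offspring hP hxP
  have hQR : Disjoint Q R :=
    D.pdisjoint (j + 1) hQ.1 hR.1 fun h => hxQ (h ▸ hxR)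
  have hsum : (μ Q).toReal + (μ R).toReal ≤ (μ P).toReal := by
    rw [← measureReal_def, ← measureReal_def, ← measureReal_def,
      ← measureReal_union hQR (D.meas _ R hR.1)]
    exact measureReal_mono (union_subset hQ.2.subset hR.2.subset)
  have hPR := D.inherit j R hR.1 P hP hR.2
  have hP0 := D.toReal_measure_pos hP
  have hR0 := D.toReal_measure_pos hR.1
  have hB : 0 < B := by nlinarith
  nlinarith

theorem offspring_finite (j : ℕ) (P : Set X) : (D.offspring j P).Finite :=
  (D.finiteLevel (j + 1)).subset fun _ h => h.1

noncomputable def offspringFinset (j : ℕ) (P : Set X) : Finset (Set X) :=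
  (D.offspring_finite j P).toFinset

@[simp]
theorem mem_offspringFinset : Q ∈ D.offspringFinset j P ↔ Q ∈ D.offspring j P :=
  Finite.mem_toFinset _

theorem ncard_offspring : (D.offspring j P).ncard = (D.offspringFinset j P).card :=
  ncard_eq_toFinset_card _ _

theorem pairwiseDisjoint_offspringFinset :
    (D.offspringFinset j P : Set (Set X)).PairwiseDisjoint id := fun _ hQ _ hR =>
  D.pdisjoint (j + 1) (D.mem_offspringFinset.1 hQ).1 (D.mem_offspringFinset.1 hR).1

theorem measurableSet_of_mem_offspringFinset (hQ : Q ∈ D.offspringFinset j P) :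
    MeasurableSet Q :=
  D.meas _ Q (D.mem_offspringFinset.1 hQ).1

theorem biUnion_offspringFinset (hP : P ∈ D.cubes j) :
    ⋃ Q ∈ D.offspringFinset j P, Q = P := by
  refine subset_antisymm (iUnion₂_subset fun Q hQ => (D.mem_offspringFinset.1 hQ).2.subset) ?_
  intro x hx
  obtain ⟨Q, hQ, hxQ⟩ := D.exists_mem_offspring hP hx
  exact mem_iUnion₂.2 ⟨Q, D.mem_offspringFinset.2 hQ, hxQ⟩

theorem sum_toReal_measure_offspring (hP : P ∈ D.cubes j) :
    ∑ Q ∈ D.offspringFinset j P, (μ Q).toReal = (μ P).toReal := by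
  have := D.isProbabilityMeasure
  simp_rw [← measureReal_def]
  have h := measureReal_biUnion_finset (μ := μ) D.pairwiseDisjoint_offspringFinset
    fun Q hQ => D.measurableSet_of_mem_offspringFinset (j := j) (P := P) hQ
  simpa only [id, D.biUnion_offspringFinset hP] using h.symm

theorem sum_setIntegral_offspring (hP : P ∈ D.cubes j) (hf : Integrable f μ) :
    ∑ Q ∈ D.offspringFinset j P, ∫ x in Q, f x ∂μ = ∫ x in P, f x ∂μ := by
  rw [← integral_biUnion_finset _ (fun Q hQ => D.measurableSet_of_mem_offspringFinset hQ)
    (fun Q hQ R hR => D.pairwiseDisjoint_offspringFinset hQ hR) fun _ _ => hf.integrableOn,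
    D.biUnion_offspringFinset hP]

theorem card_offspringFinset_le (hP : P ∈ D.cubes j) :
    ((D.offspringFinset j P).card : ℝ) ≤ B := by
  have h : ((D.offspringFinset j P).card : ℝ) * (μ P).toReal ≤ B * (μ P).toReal := calc
    _ = ∑ _Q ∈ D.offspringFinset j P, (μ P).toReal := by rw [Finset.sum_const, nsmul_eq_mul]
    _ ≤ ∑ Q ∈ D.offspringFinset j P, B * (μ Q).toReal := Finset.sum_le_sum fun Q hQ =>
      D.inherit j Q (D.mem_offspringFinset.1 hQ).1 P hP (D.mem_offspringFinset.1 hQ).2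
    _ = B * (μ P).toReal := by rw [← Finset.mul_sum, D.sum_toReal_measure_offspring hP]
  exact le_of_mul_le_mul_right h (D.toReal_measure_pos hP)

noncomputable def stepFun (j : ℕ) (P : Set X) (e : Set X → ℝ) : X → ℝ :=
  fun x => ∑ Q ∈ D.offspringFinset j P, Q.indicator (fun _ => e Q) x

theorem stepFun_apply_of_mem (hQ : Q ∈ D.offspring j P) {x : X} (hx : x ∈ Q) :
    D.stepFun j P e x = e Q := by
  rw [stepFun, Finset.sum_eq_single_of_mem Q (D.mem_offspringFinset.2 hQ) fun R hR hRQ =>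
    indicator_of_notMem (fun hxR => hRQ (D.eq_of_mem_of_mem (D.mem_offspringFinset.1 hR).1
      hQ.1 hxR hx)) _, indicator_of_mem hx]

theorem stepFun_apply_of_notMem {x : X} (hx : x ∉ P) : D.stepFun j P e x = 0 :=
  Finset.sum_eq_zero fun _ hQ =>
    indicator_of_notMem (fun hxQ => hx ((D.mem_offspringFinset.1 hQ).2.subset hxQ)) _

theorem memV_stepFun : D.MemV j P (D.stepFun j P e) :=
  ⟨fun _ hQ => ⟨_, fun _ hx => D.stepFun_apply_of_mem hQ hx⟩,
    fun _ hx => D.stepFun_apply_of_notMem hx⟩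

theorem exists_eq_stepFun_of_memV (hP : P ∈ D.cubes j) {h : X → ℝ} (hh : D.MemV j P h) :
    ∃ e, h = D.stepFun j P e := by
  choose! e he using hh.1
  refine ⟨e, funext fun x => ?_⟩
  by_cases hx : x ∈ P
  · obtain ⟨Q, hQ, hxQ⟩ := D.exists_mem_offspring hP hx
    rw [he Q hQ x hxQ, D.stepFun_apply_of_mem hQ hxQ]
  · rw [hh.2 x hx, D.stepFun_apply_of_notMem hx]

theorem mul_stepFun_eq_sum_indicator (f : X → ℝ) :
    (fun x => f x * D.stepFun j P e x) =
      fun x => ∑ Q ∈ D.offspringFinset j P, Q.indicator (fun y => f y * e Q) x := by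
  simp_rw [stepFun, Finset.mul_sum, indicator_mul_right]

theorem integrable_mul_stepFun (hf : Integrable f μ) :
    Integrable (fun x => f x * D.stepFun j P e x) μ := by
  rw [mul_stepFun_eq_sum_indicator]
  exact integrable_finsetSum _ fun Q hQ =>
    (hf.mul_const _).indicator (D.measurableSet_of_mem_offspringFinset hQ)

theorem integral_mul_stepFun (hf : Integrable f μ) :
    ∫ x, f x * D.stepFun j P e x ∂μ =
      ∑ Q ∈ D.offspringFinset j P, (∫ x in Q, f x ∂μ) * e Q := by
  rw [mul_stepFun_eq_sum_indicator, integral_finsetSum _ fun Q hQ =>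
    (hf.mul_const _).indicator (D.measurableSet_of_mem_offspringFinset hQ)]
  exact Finset.sum_congr rfl fun Q hQ => by
    rw [integral_indicator (D.measurableSet_of_mem_offspringFinset hQ), integral_mul_const]

theorem integrable_stepFun : Integrable (D.stepFun j P e) μ := by
  have := D.isProbabilityMeasure
  simpa using D.integrable_mul_stepFun (integrable_const (1 : ℝ)) (j := j) (P := P) (e := e)

theorem integral_stepFun :
    ∫ x, D.stepFun j P e x ∂μ = ∑ Q ∈ D.offspringFinset j P, (μ Q).toReal * e Q := by
  have := D.isProbabilityMeasure
  simpa [measureReal_def] using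
    D.integral_mul_stepFun (integrable_const (1 : ℝ)) (j := j) (P := P) (e := e)

theorem setIntegral_stepFun (hQ : Q ∈ D.offspring j P) :
    ∫ x in Q, D.stepFun j P e x ∂μ = (μ Q).toReal * e Q := by
  rw [setIntegral_congr_fun (D.meas _ Q hQ.1) fun x hx => D.stepFun_apply_of_mem hQ hx,
    setIntegral_const, smul_eq_mul, measureReal_def]

theorem avg_mul_toReal_measure (hQ : Q ∈ D.cubes j) :
    avg μ f Q * (μ Q).toReal = ∫ x in Q, f x ∂μ := by
  rw [avg, mul_comm, ← mul_assoc, mul_inv_cancel₀ (D.toReal_measure_pos hQ).ne', one_mul]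

/-- `𝔼[f | 𝓕_{j+1}] - 𝔼[f | 𝓕_j]` on `P`, where `𝓕_j` is generated by the cubes of
level `j`. -/
noncomputable def avgDiff (f : X → ℝ) (j : ℕ) (P : Set X) : X → ℝ :=
  D.stepFun j P fun Q => avg μ f Q - avg μ f P

theorem integral_avgDiff (hP : P ∈ D.cubes j) (hf : Integrable f μ) :
    ∫ x, D.avgDiff f j P x ∂μ = 0 := by
  rw [avgDiff, integral_stepFun]
  calc ∑ Q ∈ D.offspringFinset j P, (μ Q).toReal * (avg μ f Q - avg μ f P)
      = ∑ Q ∈ D.offspringFinset j P, ∫ x in Q, f x ∂μ -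
          (∑ Q ∈ D.offspringFinset j P, (μ Q).toReal) * avg μ f P := by
        rw [Finset.sum_mul, ← Finset.sum_sub_distrib]
        exact Finset.sum_congr rfl fun Q hQ => by
          rw [← D.avg_mul_toReal_measure (D.mem_offspringFinset.1 hQ).1]; ring
    _ = 0 := by
        rw [D.sum_setIntegral_offspring hP hf, D.sum_toReal_measure_offspring hP, mul_comm,
          D.avg_mul_toReal_measure hP, sub_self]

theorem integral_avgDiff_mul (hP : P ∈ D.cubes j) (hf : Integrable f μ) {h : X → ℝ}
    (hh : D.MemV j P h) (h0 : ∫ x, h x ∂μ = 0) :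
    ∫ x, D.avgDiff f j P x * h x ∂μ = ∫ x, f x * h x ∂μ := by
  obtain ⟨e, rfl⟩ := D.exists_eq_stepFun_of_memV hP hh
  rw [integral_stepFun] at h0
  rw [D.integral_mul_stepFun (f := D.avgDiff f j P) D.integrable_stepFun,
    D.integral_mul_stepFun hf, ← sub_eq_zero, ← Finset.sum_sub_distrib]
  calc ∑ Q ∈ D.offspringFinset j P,
        ((∫ x in Q, D.avgDiff f j P x ∂μ) * e Q - (∫ x in Q, f x ∂μ) * e Q)
      = -avg μ f P * ∑ Q ∈ D.offspringFinset j P, (μ Q).toReal * e Q := by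
        rw [Finset.mul_sum]
        refine Finset.sum_congr rfl fun Q hQ => ?_
        have hQ := D.mem_offspringFinset.1 hQ
        rw [avgDiff, D.setIntegral_stepFun hQ, ← D.avg_mul_toReal_measure hQ.1]
        ring
    _ = 0 := by rw [h0, mul_zero]

theorem integrable_of_memV (hP : P ∈ D.cubes j) {h : X → ℝ} (hh : D.MemV j P h) :
    Integrable h μ := by
  obtain ⟨e, rfl⟩ := D.exists_eq_stepFun_of_memV hP hh
  exact D.integrable_stepFun

theorem integrable_mul_of_memV (hP : P ∈ D.cubes j) (hf : Integrable f μ) {h : X → ℝ}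
    (hh : D.MemV j P h) : Integrable (fun x => f x * h x) μ := by
  obtain ⟨e, rfl⟩ := D.exists_eq_stepFun_of_memV hP hh
  exact D.integrable_mul_stepFun hf

section HaarSystem

variable {d : ℕ} {ψ : ℕ → X → ℝ}

theorem sum_sq_mul_toReal_measure_le_one (hP : P ∈ D.cubes j) (hQ : Q ∈ D.offspring j P)
    (hV : ∀ i < d, D.MemV j P (ψ i))
    (hortho : ∀ i < d, ∀ i' < d, ∫ x, ψ i x * ψ i' x ∂μ = if i = i' then 1 else 0)
    {x : X} (hx : x ∈ Q) :
    (∑ i ∈ Finset.range d, ψ i x ^ 2) * (μ Q).toReal ≤ 1 := by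
  refine sum_sq_mul_measureReal_le_one (fun i hi i' hi' => ?_) (fun i hi i' hi' => ?_)
    (D.meas _ Q hQ.1) fun i hi y hy => ?_
  · exact D.integrable_mul_of_memV hP (D.integrable_of_memV hP (hV i (Finset.mem_range.1 hi)))
      (hV i' (Finset.mem_range.1 hi'))
  · exact hortho i (Finset.mem_range.1 hi) i' (Finset.mem_range.1 hi')
  · obtain ⟨c, hc⟩ := (hV i (Finset.mem_range.1 hi)).1 Q hQ
    rw [hc y hy, hc x hx]

theorem avgDiff_eq_sum_integral_mul (hf : Integrable f μ) (hP : P ∈ D.cubes j)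
    (hV : ∀ i < d, D.MemV j P (ψ i))
    (hzero : ∀ i < d, ∫ x, ψ i x ∂μ = 0)
    (hortho : ∀ i < d, ∀ i' < d, ∫ x, ψ i x * ψ i' x ∂μ = if i = i' then 1 else 0)
    (hspan : ∀ g : X → ℝ, D.MemV j P g → ∫ x, g x ∂μ = 0 →
      ∃ c : ℕ → ℝ, ∀ x, g x = ∑ i ∈ Finset.range d, c i * ψ i x) :
    D.avgDiff f j P = fun x => ∑ i ∈ Finset.range d, (∫ y, f y * ψ i y ∂μ) * ψ i x := by
  obtain ⟨c, hc⟩ := hspan _ D.memV_stepFun (D.integral_avgDiff hP hf)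
  have hc' : D.avgDiff f j P = fun x => ∑ i ∈ Finset.range d, c i * ψ i x := funext hc
  have hcoeff : ∀ i ∈ Finset.range d, ∫ y, f y * ψ i y ∂μ = c i := fun i hi => by
    have hi' := Finset.mem_range.1 hi
    rw [← D.integral_avgDiff_mul hP hf (hV i hi') (hzero i hi'), hc',
      integral_sum_mul_eq_of_orthonormal (fun i hi i' hi' => ?_) (fun i hi i' hi' => ?_) c hi]
    · exact D.integrable_mul_of_memV hP (D.integrable_of_memV hP (hV i (Finset.mem_range.1 hi)))
        (hV i' (Finset.mem_range.1 hi'))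
    · exact hortho i (Finset.mem_range.1 hi) i' (Finset.mem_range.1 hi')
  rw [hc']
  exact funext fun x => Finset.sum_congr rfl fun i hi => by rw [hcoeff i hi]

theorem sq_avg_offspring_sub_avg_mul_le (hf : Integrable f μ) (hP : P ∈ D.cubes j)
    (hQ : Q ∈ D.offspring j P) {a : ℝ}
    (hd : d + 1 ≤ (D.offspring j P).ncard)
    (hV : ∀ i < d, D.MemV j P (ψ i))
    (hzero : ∀ i < d, ∫ x, ψ i x ∂μ = 0)
    (hortho : ∀ i < d, ∀ i' < d, ∫ x, ψ i x * ψ i' x ∂μ = if i = i' then 1 else 0)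
    (hspan : ∀ g : X → ℝ, D.MemV j P g → ∫ x, g x ∂μ = 0 →
      ∃ c : ℕ → ℝ, ∀ x, g x = ∑ i ∈ Finset.range d, c i * ψ i x)
    (hcoeff : ∀ i < d, |∫ x, f x * ψ i x ∂μ| ≤ a) :
    (avg μ f Q - avg μ f P) ^ 2 * (μ P).toReal ≤ B * (B - 1) * a ^ 2 := by
  set c : ℕ → ℝ := fun i => ∫ x, f x * ψ i x ∂μ
  obtain ⟨x, hx⟩ := D.nonempty_of_mem_cubes hQ.1
  have hΔ : avg μ f Q - avg μ f P = ∑ i ∈ Finset.range d, c i * ψ i x :=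
    (D.stepFun_apply_of_mem hQ hx).symm.trans
      (congrFun (D.avgDiff_eq_sum_integral_mul hf hP hV hzero hortho hspan) x)
  have hdB : (d : ℝ) ≤ B - 1 := by
    have hcard := D.card_offspringFinset_le hP
    rw [← ncard_offspring] at hcard
    have : (d : ℝ) + 1 ≤ (D.offspring j P).ncard := by exact_mod_cast hd
    linarith
  have hc : ∑ i ∈ Finset.range d, c i ^ 2 ≤ (B - 1) * a ^ 2 := by
    refine (Finset.sum_le_card_nsmul _ _ (a ^ 2) fun i hi => ?_).trans ?_
    · rw [← sq_abs]
      exact pow_le_pow_left₀ (abs_nonneg _) (hcoeff i (Finset.mem_range.1 hi)) 2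
    · rw [Finset.card_range, nsmul_eq_mul]
      exact mul_le_mul_of_nonneg_right hdB (sq_nonneg a)
  have hψP : (∑ i ∈ Finset.range d, ψ i x ^ 2) * (μ P).toReal ≤ B := by
    have hψ := D.sum_sq_mul_toReal_measure_le_one hP hQ hV hortho hx
    have hψ0 : 0 ≤ ∑ i ∈ Finset.range d, ψ i x ^ 2 :=
      Finset.sum_nonneg fun i _ => sq_nonneg _
    have hPQ := D.inherit j Q hQ.1 P hP hQ.2
    have hB : 0 < B :=
      pos_of_mul_pos_left ((D.toReal_measure_pos hP).trans_le hPQ) ENNReal.toReal_nonneg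
    nlinarith
  calc (avg μ f Q - avg μ f P) ^ 2 * (μ P).toReal
      ≤ (∑ i ∈ Finset.range d, c i ^ 2) *
          ((∑ i ∈ Finset.range d, ψ i x ^ 2) * (μ P).toReal) := by
        rw [hΔ, ← mul_assoc]
        exact mul_le_mul_of_nonneg_right (Finset.sum_mul_sq_le_sq_mul_sq _ _ _)
          ENNReal.toReal_nonneg
    _ ≤ (B - 1) * a ^ 2 * B :=
        mul_le_mul hc hψP (by positivity)
          (by nlinarith [sq_nonneg a, Nat.cast_nonneg (α := ℝ) d])
    _ = B * (B - 1) * a ^ 2 := by ring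

theorem abs_avg_offspring_sub_avg_le (hB : 1 ≤ B) {C α : ℝ} (hC : 0 ≤ C)
    (hf : Integrable f μ) (hP : P ∈ D.cubes j) (hQ : Q ∈ D.offspring j P)
    (hd : d + 1 ≤ (D.offspring j P).ncard)
    (hV : ∀ i < d, D.MemV j P (ψ i))
    (hzero : ∀ i < d, ∫ x, ψ i x ∂μ = 0)
    (hortho : ∀ i < d, ∀ i' < d, ∫ x, ψ i x * ψ i' x ∂μ = if i = i' then 1 else 0)
    (hspan : ∀ g : X → ℝ, D.MemV j P g → ∫ x, g x ∂μ = 0 →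
      ∃ c : ℕ → ℝ, ∀ x, g x = ∑ i ∈ Finset.range d, c i * ψ i x)
    (hcoeff : ∀ i < d, |∫ x, f x * ψ i x ∂μ| ≤ C * (μ P).toReal ^ (α + 1 / 2)) :
    |avg μ f Q - avg μ f P| ≤ C * √(B * (B - 1)) * (μ P).toReal ^ α := by
  have h := D.sq_avg_offspring_sub_avg_mul_le hf hP hQ hd hV hzero hortho hspan hcoeff
  have hm := D.toReal_measure_pos hP
  have hrhs : (C * √(B * (B - 1)) * (μ P).toReal ^ α) ^ 2 * (μ P).toReal =
      B * (B - 1) * (C * (μ P).toReal ^ (α + 1 / 2)) ^ 2 := by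
    rw [Real.rpow_add hm, ← Real.sqrt_eq_rpow, mul_pow, mul_pow, mul_pow, mul_pow,
      Real.sq_sqrt (by nlinarith), Real.sq_sqrt hm.le]
    ring
  exact abs_le_of_sq_le_sq (le_of_mul_le_mul_right (h.trans_eq hrhs.symm) hm) (by positivity)

end HaarSystem

section Telescoping

variable {F : Set X → ℝ} {K α : ℝ}

/-- The constant `B ^ α / (B ^ α - (B - 1) ^ α)` is the sum of the geometric series
`∑ₙ ((B - 1) / B) ^ (n α)`; it is kept cleared of its denominator. -/
theorem mul_abs_sub_le_of_subset (hB : 1 ≤ B) (hα : 0 ≤ α) (hK : 0 ≤ K)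
    (hstep : ∀ j, ∀ P ∈ D.cubes j, ∀ Q ∈ D.offspring j P,
      |F Q - F P| ≤ K * (μ P).toReal ^ α)
    {l : ℕ} (hP : P ∈ D.cubes j) (hQ : Q ∈ D.cubes (j + l)) (hQP : Q ⊆ P) :
    (B ^ α - (B - 1) ^ α) * |F Q - F P| ≤ K * B ^ α * (μ P).toReal ^ α := by
  have hgap : 0 ≤ B ^ α - (B - 1) ^ α :=
    sub_nonneg.2 (Real.rpow_le_rpow (by linarith) (by linarith) hα)
  induction l generalizing j P with
  | zero =>
    obtain ⟨x, hx⟩ := D.nonempty_of_mem_cubes hQ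
    rw [D.eq_of_mem_of_mem hQ hP hx (hQP hx), sub_self, abs_zero, mul_zero]
    positivity
  | succ l ih =>
    obtain ⟨x, hx⟩ := D.nonempty_of_mem_cubes hQ
    obtain ⟨R, hR, hxR⟩ := D.exists_mem_cubes (j + 1) x
    have hRP : R ∈ D.offspring j P :=
      D.mem_offspring_of_subset hP hR (D.subset_of_mem_of_mem hR hP hxR (hQP hx))
    have hQ' : Q ∈ D.cubes (j + 1 + l) := by rwa [add_right_comm, add_assoc]
    have hQR := ih hR hQ' (D.subset_of_mem_of_mem hQ' hR hx hxR)
    have hRP' := mul_le_mul_of_nonneg_left (hstep j P hP R hRP) hgap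
    have hmeas : B ^ α * (μ R).toReal ^ α ≤ (B - 1) ^ α * (μ P).toReal ^ α := by
      rw [← Real.mul_rpow (by linarith) ENNReal.toReal_nonneg,
        ← Real.mul_rpow (by linarith) ENNReal.toReal_nonneg]
      exact Real.rpow_le_rpow (by positivity) (D.mul_toReal_measure_offspring_le hP hRP) hα
    calc (B ^ α - (B - 1) ^ α) * |F Q - F P|
        ≤ (B ^ α - (B - 1) ^ α) * |F Q - F R| + (B ^ α - (B - 1) ^ α) * |F R - F P| := by
          rw [← mul_add]; exact mul_le_mul_of_nonneg_left (abs_sub_le _ _ _) hgap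
      _ ≤ K * B ^ α * (μ P).toReal ^ α := by nlinarith [mul_le_mul_of_nonneg_left hmeas hK]

theorem exists_mem_cubes_le_of_subset (hQ : Q ∈ D.cubes J) (hP : D.Mem P) (hQP : Q ⊆ P) :
    ∃ j ≤ J, P ∈ D.cubes j := by
  obtain ⟨j, hPj⟩ := hP
  rcases le_or_gt j J with hj | hj
  · exact ⟨j, hj, hPj⟩
  · obtain ⟨l, rfl⟩ := Nat.exists_eq_add_of_le hj.le
    obtain ⟨x, hx⟩ := D.nonempty_of_mem_cubes hQ
    have hPQ := D.subset_of_mem_of_mem hPj hQ (hQP hx) hx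
    exact ⟨J, le_rfl, subset_antisymm hPQ hQP ▸ hQ⟩

theorem exists_cubeDist_eq (hQ : Q ∈ D.cubes J) (S : Set X) :
    ∃ j ≤ J, ∃ P ∈ D.cubes j, Q ∪ S ⊆ P ∧ D.cubeDist Q S = (μ P).toReal := by
  set s := {r : ℝ | ∃ P, D.Mem P ∧ Q ∪ S ⊆ P ∧ r = (μ P).toReal}
  have hfin : s.Finite := by
    refine (((finite_Iic J).biUnion fun j _ => D.finiteLevel j).image
      fun P => (μ P).toReal).subset ?_
    rintro r ⟨P, hP, hQSP, rfl⟩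
    obtain ⟨j, hj, hPj⟩ := D.exists_mem_cubes_le_of_subset hQ hP (subset_union_left.trans hQSP)
    exact ⟨P, mem_biUnion hj hPj, rfl⟩
  have hne : s.Nonempty := ⟨_, univ, ⟨0, by rw [D.zeroth]; rfl⟩, subset_univ _, rfl⟩
  obtain ⟨P, hP, hQSP, hPeq⟩ := hne.csInf_mem hfin
  obtain ⟨j, hj, hPj⟩ := D.exists_mem_cubes_le_of_subset hQ hP (subset_union_left.trans hQSP)
  exact ⟨j, hj, P, hPj, hQSP, hPeq⟩

theorem abs_sub_le_cubeDist_rpow (hB : 1 ≤ B) (hα : 0 < α) (hK : 0 ≤ K)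
    (hstep : ∀ j, ∀ P ∈ D.cubes j, ∀ Q ∈ D.offspring j P,
      |F Q - F P| ≤ K * (μ P).toReal ^ α)
    {Q₁ Q₂ : Set X} (hQ₁ : Q₁ ∈ D.cubes J) (hQ₂ : Q₂ ∈ D.cubes J) :
    |F Q₁ - F Q₂| ≤ 2 * K * B ^ α / (B ^ α - (B - 1) ^ α) * D.cubeDist Q₁ Q₂ ^ α := by
  obtain ⟨j, hj, P, hP, hsub, hdist⟩ := D.exists_cubeDist_eq hQ₁ Q₂
  obtain ⟨l, rfl⟩ := Nat.exists_eq_add_of_le hj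
  have hgap : 0 < B ^ α - (B - 1) ^ α :=
    sub_pos.2 (Real.rpow_lt_rpow (by linarith) (by linarith) hα)
  have h₁ := D.mul_abs_sub_le_of_subset hB hα.le hK hstep hP hQ₁
    (subset_union_left.trans hsub)
  have h₂ := D.mul_abs_sub_le_of_subset hB hα.le hK hstep hP hQ₂
    (subset_union_right.trans hsub)
  rw [hdist, div_mul_eq_mul_div, le_div_iff₀ hgap]
  nlinarith [abs_sub_le (F Q₁) (F P) (F Q₂), abs_sub_comm (F P) (F Q₂)]

end Telescoping

end DyadicFamily

/-- If the generalized Haar coefficients of `f ∈ L¹` satisfy the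
power law `|⟨f, ψ^λ_{j,k}⟩| ≤ C μ(Q_{j,k})^{α+1/2}` for all `j, k, λ`, then for every
level `J ≥ 1` and all cubes `Q_{J,m}, Q_{J,n}` of level `J`,
`|f_{Q_{J,m}} − f_{Q_{J,n}}| ≤ (2C B^α √(B(B−1)) / (B^α − (B−1)^α)) δ_D(Q_{J,m},Q_{J,n})^α`,
i.e. `f` belongs to the pixelated Lipschitz class `Λ_{δ_D}(α)`. -/
theorem pixelated_lipschitz_of_haar_coeff {X : Type*} [MeasurableSpace X]
    {μ : MeasureTheory.Measure X} {B : ℝ} (hB : 2 ≤ B) (D : DyadicFamily μ B)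
    (α : ℝ) (hα : 0 < α) (C : ℝ) (hC : 0 < C)
    (f : X → ℝ) (hf : MeasureTheory.Integrable f μ)
    (dimm : ℕ → Set X → ℕ) (ψ : ℕ → Set X → ℕ → X → ℝ)
    (hdim : ∀ j, ∀ Q ∈ D.cubes j, dimm j Q + 1 = (D.offspring j Q).ncard)
    (hV : ∀ j, ∀ Q ∈ D.cubes j, ∀ lam < dimm j Q, D.MemV j Q (ψ j Q lam))
    (hzero : ∀ j, ∀ Q ∈ D.cubes j, ∀ lam < dimm j Q, ∫ x, ψ j Q lam x ∂μ = 0)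
    (hortho : ∀ j, ∀ Q ∈ D.cubes j, ∀ lam < dimm j Q, ∀ lam' < dimm j Q,
      ∫ x, ψ j Q lam x * ψ j Q lam' x ∂μ = if lam = lam' then 1 else 0)
    (hspan : ∀ j, ∀ Q ∈ D.cubes j, ∀ g : X → ℝ, D.MemV j Q g → (∫ x, g x ∂μ) = 0 →
      ∃ c : ℕ → ℝ, ∀ x, g x = ∑ lam ∈ Finset.range (dimm j Q), c lam * ψ j Q lam x)
    (hcoeff : ∀ j, ∀ Q ∈ D.cubes j, ∀ lam < dimm j Q,
      |∫ x, f x * ψ j Q lam x ∂μ| ≤ C * (μ Q).toReal ^ (α + 1/2)) :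
    ∀ J : ℕ, 1 ≤ J → ∀ Qm ∈ D.cubes J, ∀ Qn ∈ D.cubes J,
      |DyadicFamily.avg μ f Qm - DyadicFamily.avg μ f Qn| ≤
        (2 * C * B ^ α * Real.sqrt (B * (B - 1)) / (B ^ α - (B - 1) ^ α)) *
          D.cubeDist Qm Qn ^ α := by
  intro J _ Qm hQm Qn hQn
  have hstep : ∀ j, ∀ P ∈ D.cubes j, ∀ Q ∈ D.offspring j P,
      |DyadicFamily.avg μ f Q - DyadicFamily.avg μ f P| ≤
        C * √(B * (B - 1)) * (μ P).toReal ^ α := fun j P hP Q hQ =>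
    D.abs_avg_offspring_sub_avg_le (by linarith) hC.le hf hP hQ (hdim j P hP).le (hV j P hP)
      (hzero j P hP) (hortho j P hP) (hspan j P hP) (hcoeff j P hP)
  calc _ ≤ 2 * (C * √(B * (B - 1))) * B ^ α / (B ^ α - (B - 1) ^ α) *
          D.cubeDist Qm Qn ^ α :=
        D.abs_sub_le_cubeDist_rpow (by linarith) hα (by positivity) hstep hQm hQn
    _ = _ := by ring
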